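/- Every strongly anti-pasch Steiner triple system is anti-pasch. That is, if S is a Steiner triple system of order n with β(S) = C(n,3), then S contains no pasch configuration. -/

import Mathlib

/-- A Steiner quasigroup structure on `X`. -/
def IsSteinerQuasigroup {X : Type*} (star : X → X → X) : Prop :=
  (∀ a, star a a = a) ∧ (∀ a b, star a b = star b a) ∧
    (∀ a b, star a (star a b) = b)

/-- The blocks of the Steiner triple system associated to a Steiner quasigroup:
the 3-element subsets `{a,b,c}` with `a,b,c` distinct and `a ⋆ b = c`. -/
def blocksOf {X : Type*} [DecidableEq X] (star : X → X → X) : Set (Finset X) :=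
  {B | ∃ a b c : X, a ≠ b ∧ a ≠ c ∧ b ≠ c ∧ B = {a, b, c} ∧ star a b = c}

/-- `A(S) = {{a⋆b, b⋆c, c⋆a} : a,b,c pairwise distinct, {a,b,c} ∉ S}`. -/
def ASet {X : Type*} [DecidableEq X] (star : X → X → X) : Set (Finset X) :=
  {B | ∃ a b c : X, a ≠ b ∧ a ≠ c ∧ b ≠ c ∧
    ({a, b, c} : Finset X) ∉ blocksOf star ∧
    B = {star a b, star b c, star c a}}

/-- `B(S) = {{a⋆b, b⋆c, c⋆a} : a,b,c pairwise distinct}`. -/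
def BSet {X : Type*} [DecidableEq X] (star : X → X → X) : Set (Finset X) :=
  {B | ∃ a b c : X, a ≠ b ∧ a ≠ c ∧ b ≠ c ∧
    B = {star a b, star b c, star c a}}

/-- `α(S) = |A(S)|`. -/
noncomputable def alphaInv {X : Type*} [DecidableEq X] (star : X → X → X) : ℕ :=
  (ASet star).ncard

/-- `β(S) = |B(S)|`. -/
noncomputable def betaInv {X : Type*} [DecidableEq X] (star : X → X → X) : ℕ :=
  (BSet star).ncard

/-- A pasch configuration: four blocks `{a,b,c}, {a,d,e}, {f,b,d}, {f,c,e}`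
with `a,b,c,d,e,f` pairwise distinct. -/
def IsPasch {X : Type*} [DecidableEq X] (P : Set (Finset X)) : Prop :=
  ∃ a b c d e f : X, ([a, b, c, d, e, f] : List X).Pairwise (· ≠ ·) ∧
    P = {({a, b, c} : Finset X), {a, d, e}, {f, b, d}, {f, c, e}}

/-- A Steiner triple system is anti-pasch if it contains no pasch configuration. -/
def IsAntiPasch {X : Type*} [DecidableEq X] (star : X → X → X) : Prop :=
  ∀ P : Set (Finset X), IsPasch P → ¬ P ⊆ blocksOf star


/-!
If the four blocks `{a,b,c}, {a,d,e}, {f,b,d}, {f,c,e}` of a pasch configuration lie in `S`, then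
the two disjoint triples `{a,c,e}` and `{b,d,f}` both have derived triple `{b,d,f}`. So the map
`{x,y,z} ↦ {x⋆y, y⋆z, z⋆x}`, whose image on the `C(n,3)` triples is `B(S)`, is not injective,
and `β(S) < C(n,3)`.
-/

namespace IsSteinerQuasigroup

variable {X : Type*} {star : X → X → X}

theorem idem (hq : IsSteinerQuasigroup star) (x : X) : star x x = x := hq.1 x

theorem comm (hq : IsSteinerQuasigroup star) (x y : X) : star x y = star y x := hq.2.1 x y

theorem star_star (hq : IsSteinerQuasigroup star) (x y : X) : star x (star x y) = y := hq.2.2 x y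

theorem star_rotate (hq : IsSteinerQuasigroup star) {x y z : X} (h : star x y = z) :
    star y z = x := by
  rw [← h, hq.comm x y, hq.star_star]

theorem star_ne_left (hq : IsSteinerQuasigroup star) {x y : X} (hxy : x ≠ y) :
    star x y ≠ x := by
  intro h
  apply hxy
  rw [← hq.star_star x y, h, hq.idem]

theorem star_ne_right (hq : IsSteinerQuasigroup star) {x y : X} (hxy : x ≠ y) :
    star x y ≠ y := by
  rw [hq.comm]
  exact hq.star_ne_left hxy.symm

variable [DecidableEq X]

theorem star_mem_of_mem_blocksOf (hq : IsSteinerQuasigroup star) {T : Finset X}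
    (hT : T ∈ blocksOf star) {x y : X} (hx : x ∈ T) (hy : y ∈ T) : star x y ∈ T := by
  obtain ⟨a, b, c, -, -, -, rfl, hab⟩ := hT
  have hbc := hq.star_rotate hab
  have hca := hq.star_rotate hbc
  have hba := (hq.comm b a).trans hab
  have hcb := (hq.comm c b).trans hbc
  have hac := (hq.comm a c).trans hca
  simp only [Finset.mem_insert, Finset.mem_singleton] at hx hy ⊢
  rcases hx with rfl | rfl | rfl <;> rcases hy with rfl | rfl | rfl <;>
    simp only [hq.idem, hab, hbc, hca, hba, hcb, hac, true_or, or_true]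

theorem star_eq_of_mem_blocksOf (hq : IsSteinerQuasigroup star) {a b c : X} (hab : a ≠ b)
    (h : ({a, b, c} : Finset X) ∈ blocksOf star) : star a b = c := by
  have hmem := hq.star_mem_of_mem_blocksOf h (x := a) (y := b) (by simp) (by simp)
  simp only [Finset.mem_insert, Finset.mem_singleton] at hmem
  rcases hmem with ha | hb | hc
  · exact absurd ha (hq.star_ne_left hab)
  · exact absurd hb (hq.star_ne_right hab)
  · exact hc

end IsSteinerQuasigroup

section DerivedTriple

variable {X : Type*} [DecidableEq X] {star : X → X → X}

variable (star) in
def derivedTriple (s : Finset X) : Finset X :=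
  s.offDiag.image fun p => star p.1 p.2

theorem derivedTriple_triple (hcomm : ∀ x y, star x y = star y x) {a b c : X}
    (hab : a ≠ b) (hac : a ≠ c) (hbc : b ≠ c) :
    derivedTriple star {a, b, c} = {star a b, star b c, star c a} := by
  ext x
  simp only [derivedTriple, Finset.mem_image, Finset.mem_offDiag, Finset.mem_insert,
    Finset.mem_singleton, Prod.exists]
  constructor
  · rintro ⟨p, q, ⟨hp, hq, hpq⟩, rfl⟩
    rcases hp with hp | hp | hp <;> rcases hq with hq | hq | hq <;>
      simp only [hp, hq] at hpq ⊢ <;>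
      simp [hcomm b a, hcomm c b, hcomm a c] at hpq ⊢
  · rintro (rfl | rfl | rfl)
    · exact ⟨a, b, by simp [hab]⟩
    · exact ⟨b, c, by simp [hbc]⟩
    · exact ⟨c, a, by simp [hac.symm]⟩

theorem BSet_eq_image_derivedTriple (hcomm : ∀ x y, star x y = star y x) :
    BSet star = derivedTriple star '' {s : Finset X | s.card = 3} := by
  ext B
  constructor
  · rintro ⟨a, b, c, hab, hac, hbc, rfl⟩
    exact ⟨{a, b, c}, Finset.card_eq_three.mpr ⟨a, b, c, hab, hac, hbc, rfl⟩,
      derivedTriple_triple hcomm hab hac hbc⟩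
  · rintro ⟨s, hs, rfl⟩
    obtain ⟨a, b, c, hab, hac, hbc, rfl⟩ := Finset.card_eq_three.mp hs
    exact ⟨a, b, c, hab, hac, hbc, derivedTriple_triple hcomm hab hac hbc⟩

theorem injOn_derivedTriple_of_betaInv_eq [Fintype X] (hcomm : ∀ x y, star x y = star y x)
    (hb : betaInv star = (Fintype.card X).choose 3) :
    Set.InjOn (derivedTriple star) {s : Finset X | s.card = 3} := by
  have hcard : {s : Finset X | s.card = 3}.ncard = (Fintype.card X).choose 3 := by
    rw [← Finset.card_univ, ← Finset.card_powersetCard, ← Set.ncard_coe_finset]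
    congr
    ext s
    simp
  refine Set.injOn_of_ncard_image_eq ?_ (Set.toFinite _)
  rw [← BSet_eq_image_derivedTriple hcomm, ← betaInv, hb, hcard]

theorem isAntiPasch_of_injOn_derivedTriple (hq : IsSteinerQuasigroup star)
    (hinj : Set.InjOn (derivedTriple star) {s : Finset X | s.card = 3}) :
    IsAntiPasch star := by
  rintro P ⟨a, b, c, d, e, f, hpw, rfl⟩ hsub
  simp only [List.pairwise_cons, List.mem_cons, List.not_mem_nil, or_false, forall_eq_or_imp,
    forall_eq, List.Pairwise.nil] at hpw
  obtain ⟨⟨hab, hac, had, hae, haf⟩, ⟨hbc, hbd, hbe, hbf⟩, ⟨hcd, hce, hcf⟩, ⟨hde, hdf⟩, hef, -⟩ :=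
    hpw
  have habc := hq.star_eq_of_mem_blocksOf (c := c) hab (hsub (by simp))
  have hade := hq.star_eq_of_mem_blocksOf (c := e) had (hsub (by simp))
  have hfbd := hq.star_eq_of_mem_blocksOf (c := d) hbf.symm (hsub (by simp))
  have hfce := hq.star_eq_of_mem_blocksOf (c := e) hcf.symm (hsub (by simp))
  have hcollision : derivedTriple star {a, c, e} = derivedTriple star {b, d, f} := by
    rw [derivedTriple_triple hq.comm hac hae hce, derivedTriple_triple hq.comm hbd hbf hdf,
      hq.comm a c, hq.star_rotate (hq.star_rotate habc), hq.star_rotate hfce,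
      hq.star_rotate (hq.star_rotate hade), hq.star_rotate hfbd,
      hq.star_rotate (hq.star_rotate hfbd), hfbd, Finset.insert_comm]
  have hdisjoint : ({a, c, e} : Finset X) ≠ {b, d, f} := by
    intro h
    have : a ∈ ({b, d, f} : Finset X) := h ▸ by simp
    simp only [Finset.mem_insert, Finset.mem_singleton] at this
    tauto
  exact hdisjoint (hinj (Finset.card_eq_three.mpr ⟨a, c, e, hac, hae, hce, rfl⟩)
    (Finset.card_eq_three.mpr ⟨b, d, f, hbd, hbf, hdf, rfl⟩) hcollision)

end DerivedTriple

/-- Every strongly anti-pasch Steiner triple system is anti-pasch. -/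
theorem stmt10 {X : Type*} [Fintype X] [DecidableEq X]
    (star : X → X → X) (hq : IsSteinerQuasigroup star)
    (n : ℕ) (hcard : Fintype.card X = n)
    (hb : betaInv star = n.choose 3) :
    IsAntiPasch star := by
  subst hcard
  exact isAntiPasch_of_injOn_derivedTriple hq (injOn_derivedTriple_of_betaInv_eq hq.comm hb)
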